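/- arXiv:math/0608580 — 5 statements merged into one kernel-verified Lean document; each statement's English description precedes it below -/
import Mathlib

section
/- Every solution of the difference equation x_{n+1} - 2x_n + x_{n-1} = -4 sin²(h/2) x_n is an exact discretization of the harmonic oscillator: x_n = x(nh) where x(t) = x_0 cos t + v_0 sin t with v_0 = (x_1 - x_0 cos h)/sin h, and x(t) satisfies ẍ = -x with x(0)=x_0, ẋ(0)=v_0. -/
/-! Since `2 - 4 sin²(h/2) = 2 cos h`, the recurrence reads `x (n+1) = 2 cos h · x n - x (n-1)`.
Every `X t = A cos t + B sin t` obeys the same relation along the grid, by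
`X (t + h) + X (t - h) = 2 cos h · X t`, and `B` is chosen so that `X` matches `x` at `0` and `h`;
a two-step recurrence being determined by its first two values, `x n = X (n h)`. -/

open Real

theorem eq_of_two_step_recurrence {α : Type*} (F : α → α → α) {u v : ℕ → α}
    (hu : ∀ n, u (n + 2) = F (u (n + 1)) (u n)) (hv : ∀ n, v (n + 2) = F (v (n + 1)) (v n))
    (h0 : u 0 = v 0) (h1 : u 1 = v 1) : u = v := by
  funext n
  induction n using Nat.twoStepInduction with
  | zero => exact h0
  | one => exact h1
  | more n ihn ihn1 => rw [hu, hv, ihn, ihn1]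

theorem two_sub_four_mul_sin_half_sq (h : ℝ) : 2 - 4 * sin (h / 2) ^ 2 = 2 * cos h := by
  rw [sin_sq_eq_half_sub, mul_div_cancel₀ h two_ne_zero]
  ring

theorem cos_sin_comb_add_add_sub (A B t h : ℝ) :
    (A * cos (t + h) + B * sin (t + h)) + (A * cos (t - h) + B * sin (t - h)) =
      2 * cos h * (A * cos t + B * sin t) := by
  rw [cos_add, sin_add, cos_sub, sin_sub]
  ring

theorem hasDerivAt_cos_sin_comb (A B t : ℝ) :
    HasDerivAt (fun t => A * cos t + B * sin t) (B * cos t + -A * sin t) t :=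
  (((hasDerivAt_cos t).const_mul A).add ((hasDerivAt_sin t).const_mul B)).congr_deriv (by ring)

theorem deriv_cos_sin_comb (A B : ℝ) :
    deriv (fun t => A * cos t + B * sin t) = fun t => B * cos t + -A * sin t :=
  funext fun t => (hasDerivAt_cos_sin_comb A B t).deriv

theorem deriv_deriv_cos_sin_comb (A B t : ℝ) :
    deriv (deriv (fun t => A * cos t + B * sin t)) t = -(A * cos t + B * sin t) := by
  rw [deriv_cos_sin_comb, deriv_cos_sin_comb]
  ring

theorem stmt_1 (h : ℝ) (hs : Real.sin h ≠ 0) (x : ℕ → ℝ)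
    (hrec : ∀ n : ℕ, 1 ≤ n →
      x (n + 1) - 2 * x n + x (n - 1) = -(4 * Real.sin (h / 2) ^ 2) * x n)
    (X : ℝ → ℝ)
    (hX : ∀ t : ℝ, X t = x 0 * Real.cos t +
      (x 1 - x 0 * Real.cos h) / Real.sin h * Real.sin t) :
    (∀ n : ℕ, x n = X (n * h)) ∧
    (∀ t : ℝ, deriv (deriv X) t = - X t) ∧
    X 0 = x 0 ∧
    deriv X 0 = (x 1 - x 0 * Real.cos h) / Real.sin h := by
  set B := (x 1 - x 0 * cos h) / sin h
  obtain rfl : X = fun t => x 0 * cos t + B * sin t := funext hX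
  have hx : ∀ n, x (n + 2) = 2 * cos h * x (n + 1) - x n := fun n => by
    have hn := hrec (n + 1) n.succ_pos
    rw [Nat.add_sub_cancel] at hn
    linear_combination hn + x (n + 1) * two_sub_four_mul_sin_half_sq h
  have hgrid : x = fun n : ℕ => x 0 * cos (n * h) + B * sin (n * h) := by
    refine eq_of_two_step_recurrence (fun a b => 2 * cos h * a - b) hx (fun n => ?_) ?_ ?_
    · push_cast
      rw [← cos_sin_comb_add_add_sub (x 0) B ((n + 1) * h) h]
      ring_nf
    · simp
    · simp [B, div_mul_cancel₀ _ hs]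
  refine ⟨fun n => congrFun hgrid n, deriv_deriv_cos_sin_comb _ _, by simp, ?_⟩
  rw [deriv_cos_sin_comb]
  simp
end

section
/- For the discrete Kepler problem, the angular momentum L_n = α m (r⃗_n × r⃗_{n+1})/Δt_n is conserved: L_n = L_{n-1} for all n ≥ 1. -/
/-!
Taking the cross product of the discrete Kepler equation with `r⃗_n` annihilates its
right-hand side, which is parallel to `r⃗_n`; what remains is exactly
`(r⃗_n × r⃗_{n+1}) / Δt_n = (r⃗_{n-1} × r⃗_n) / Δt_{n-1}`.
-/

open Real

noncomputable def cross3 (u v : EuclideanSpace ℝ (Fin 3)) : EuclideanSpace ℝ (Fin 3) :=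
  (WithLp.equiv 2 (Fin 3 → ℝ)).symm
    ![u 1 * v 2 - u 2 * v 1, u 2 * v 0 - u 0 * v 2, u 0 * v 1 - u 1 * v 0]

open Matrix

lemma cross3_eq_toLp_crossProduct (u v : EuclideanSpace ℝ (Fin 3)) :
    cross3 u v = WithLp.toLp 2 (u.ofLp ⨯₃ v.ofLp) := by
  simp [cross3, cross_apply]

lemma smul_cross3_eq_of_smul_add_smul_eq_smul {a b c : ℝ} {x y p : EuclideanSpace ℝ (Fin 3)}
    (h : a • x + b • y = c • p) : a • cross3 p x = b • cross3 y p := by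
  have hcross : a • (p.ofLp ⨯₃ x.ofLp) + b • (p.ofLp ⨯₃ y.ofLp) = 0 := by
    have := congrArg (fun v ↦ p.ofLp ⨯₃ v.ofLp) h
    simpa only [WithLp.ofLp_add, WithLp.ofLp_smul, map_add, map_smul, cross_self, smul_zero]
      using this
  simp only [cross3_eq_toLp_crossProduct, ← WithLp.toLp_smul, ← cross_anticomm p.ofLp y.ofLp,
    smul_neg]
  rw [eq_neg_of_add_eq_zero_left hcross]

theorem stmt_3_general (m k α δ : ℝ)
    (r : ℕ → EuclideanSpace ℝ (Fin 3))
    (Δt : ℕ → ℝ)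
    (hKepler : ∀ n : ℕ, 1 ≤ n →
      (Δt n)⁻¹ • r (n + 1) + (Δt (n - 1))⁻¹ • r (n - 1) =
        (1 / Δt n + 1 / Δt (n - 1) -
          k * Δt (n - 1) / (α * m * ‖r n‖ ^ 2 * ‖r (n - 1)‖ * Real.cos δ)) • r n)
    (L : ℕ → EuclideanSpace ℝ (Fin 3))
    (hL : ∀ n, L n = (α * m / Δt n) • cross3 (r n) (r (n + 1))) :
    ∀ n : ℕ, 1 ≤ n → L n = L (n - 1) := by
  rintro (_ | n) hn
  · omega
  have hmomentum := smul_cross3_eq_of_smul_add_smul_eq_smul (hKepler (n + 1) hn)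
  simp only [Nat.add_sub_cancel] at hmomentum ⊢
  rw [hL, hL, div_eq_mul_inv, div_eq_mul_inv, mul_smul _ (Δt _)⁻¹, mul_smul _ (Δt _)⁻¹, hmomentum]

theorem stmt_3 (m k α δ : ℝ) (hm : 0 < m) (hk : 0 < k) (hα : 0 < α)
    (r : ℕ → EuclideanSpace ℝ (Fin 3)) (hr : ∀ n, r n ≠ 0)
    (Δt : ℕ → ℝ) (hΔt : ∀ n, 0 < Δt n)
    (hKepler : ∀ n : ℕ, 1 ≤ n →
      (Δt n)⁻¹ • r (n + 1) + (Δt (n - 1))⁻¹ • r (n - 1) =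
        (1 / Δt n + 1 / Δt (n - 1) -
          k * Δt (n - 1) / (α * m * ‖r n‖ ^ 2 * ‖r (n - 1)‖ * Real.cos δ)) • r n)
    (L : ℕ → EuclideanSpace ℝ (Fin 3))
    (hL : ∀ n, L n = (α * m / Δt n) • cross3 (r n) (r (n + 1))) :
    ∀ n : ℕ, 1 ≤ n → L n = L (n - 1) :=
  stmt_3_general m k α δ r Δt hKepler L hL
end

section
/- For the discrete Kepler problem with constant half-angle δ between consecutive radius vectors, the discrete energy E_n = |p⃗_n|²/(2m) - k/(α R_n) is conserved: E_n = E_{n-1}, where p⃗_n = m(r⃗_{n+1} - r⃗_n)/Δt_n and R_n = 2 r_n r_{n+1} cos δ/(r_n + r_{n+1}). -/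
/-!
Write `A, B, C` for `r_{n-1}, r_n, r_{n+1}` and `τ, σ` for `Δt_{n-1}, Δt_n`. The identity
`C τ = A σ` makes `w = A / τ = C / σ` common to both steps, so the terms `m C²/(2σ²)` and
`m A²/(2τ²)` of the two energies cancel, and `E_n - E_{n-1}` becomes `(1/σ - 1/τ) · m/2` times
the defect of the Kepler equation dotted with `r_n`, which vanishes.
-/

open Real

/-- `u` plays the role of `cos 2δ` and `c` that of `cos δ`. -/
noncomputable def discreteKeplerEnergy (m k α c u a b σ : ℝ) : ℝ :=
  (m / σ) ^ 2 * (a ^ 2 + b ^ 2 - 2 * (a * b * u)) / (2 * m) - k / (α * (2 * a * b * c / (a + b)))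

section InnerProduct

variable {V : Type*} [NormedAddCommGroup V] [InnerProductSpace ℝ V]

theorem norm_smul_sub_sq_of_inner_eq {y z : V} {s u : ℝ} (h : inner ℝ y z = ‖y‖ * ‖z‖ * u) :
    ‖s • (z - y)‖ ^ 2 = s ^ 2 * (‖y‖ ^ 2 + ‖z‖ ^ 2 - 2 * (‖y‖ * ‖z‖ * u)) := by
  rw [norm_smul, mul_pow, Real.norm_eq_abs, sq_abs, norm_sub_sq_real, real_inner_comm, h]
  ring

theorem inner_eq_of_smul_add_smul_eq {x y z : V} {σ τ l u : ℝ}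
    (h : σ⁻¹ • z + τ⁻¹ • x = l • y)
    (hxy : inner ℝ x y = ‖x‖ * ‖y‖ * u) (hyz : inner ℝ y z = ‖y‖ * ‖z‖ * u) :
    σ⁻¹ * (‖y‖ * ‖z‖ * u) + τ⁻¹ * (‖x‖ * ‖y‖ * u) = l * ‖y‖ ^ 2 := by
  have h' := congrArg (inner ℝ y) h
  rwa [inner_add_right, real_inner_smul_right, real_inner_smul_right, real_inner_smul_right,
    real_inner_comm x, hxy, hyz, real_inner_self_eq_norm_sq] at h'

end InnerProduct

theorem discreteKeplerEnergy_eq {m k α c u A B C σ τ : ℝ} (hm : m ≠ 0) (hα : α ≠ 0) (hc : c ≠ 0)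
    (hA : A ≠ 0) (hB : B ≠ 0) (hσ : σ ≠ 0) (hτ : τ ≠ 0)
    (hKepler : σ⁻¹ * (B * C * u) + τ⁻¹ * (A * B * u) =
      (1 / σ + 1 / τ - k * τ / (α * m * B ^ 2 * A * c)) * B ^ 2)
    (hident : C * τ = A * σ) :
    discreteKeplerEnergy m k α c u B C σ = discreteKeplerEnergy m k α c u A B τ := by
  obtain ⟨w, rfl, rfl⟩ : ∃ w, A = w * τ ∧ C = w * σ :=
    ⟨A / τ, by field_simp, by field_simp; linarith⟩
  have hw : w ≠ 0 := left_ne_zero_of_mul hA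
  have hKepler' : 2 * (B * w * u) = (1 / σ + 1 / τ) * B ^ 2 - k / (α * m * w * c) := by
    field_simp at hKepler ⊢
    linear_combination hKepler
  unfold discreteKeplerEnergy
  rw [mul_div_assoc', mul_div_assoc', div_div_eq_mul_div, div_div_eq_mul_div, ← sub_eq_zero]
  calc _ = (σ⁻¹ - τ⁻¹) * (m / 2) *
        ((1 / σ + 1 / τ) * B ^ 2 - k / (α * m * w * c) - 2 * (B * w * u)) := by
        field_simp
        ring
    _ = 0 := by rw [hKepler', sub_self, mul_zero]

theorem stmt_6_general (m k α δ : ℝ) (hm : 0 < m) (hα : 0 < α)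
    (hc : Real.cos δ ≠ 0)
    (r : ℕ → EuclideanSpace ℝ (Fin 3)) (hr : ∀ n, r n ≠ 0)
    (Δt : ℕ → ℝ) (hΔt : ∀ n, 0 < Δt n)
    (hKepler : ∀ n : ℕ, 1 ≤ n →
      (Δt n)⁻¹ • r (n + 1) + (Δt (n - 1))⁻¹ • r (n - 1) =
        (1 / Δt n + 1 / Δt (n - 1) -
          k * Δt (n - 1) / (α * m * ‖r n‖ ^ 2 * ‖r (n - 1)‖ * Real.cos δ)) • r n)
    (hangle : ∀ n : ℕ, inner ℝ (r n) (r (n + 1)) = ‖r n‖ * ‖r (n + 1)‖ * Real.cos (2 * δ))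
    (hident : ∀ n : ℕ, 1 ≤ n → ‖r (n + 1)‖ * Δt (n - 1) = ‖r (n - 1)‖ * Δt n)
    (p : ℕ → EuclideanSpace ℝ (Fin 3))
    (hp : ∀ n, p n = (m / Δt n) • (r (n + 1) - r n))
    (R : ℕ → ℝ)
    (hR : ∀ n, R n = 2 * ‖r n‖ * ‖r (n + 1)‖ * Real.cos δ / (‖r n‖ + ‖r (n + 1)‖))
    (E : ℕ → ℝ)
    (hE : ∀ n, E n = ‖p n‖ ^ 2 / (2 * m) - k / (α * R n)) :
    ∀ n : ℕ, 1 ≤ n → E n = E (n - 1) := by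
  have hE' : ∀ n, E n = discreteKeplerEnergy m k α (cos δ) (cos (2 * δ)) ‖r n‖ ‖r (n + 1)‖ (Δt n) :=
    fun n ↦ by rw [hE, hp, hR, norm_smul_sub_sq_of_inner_eq (hangle n), discreteKeplerEnergy]
  intro n hn
  obtain ⟨j, rfl⟩ := Nat.exists_eq_add_of_le' hn
  have hKepler' := hKepler (j + 1) hn
  have hident' := hident (j + 1) hn
  simp only [Nat.add_sub_cancel] at hKepler' hident' ⊢
  rw [hE', hE']
  exact discreteKeplerEnergy_eq hm.ne' hα.ne' hc (norm_ne_zero_iff.mpr (hr j))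
    (norm_ne_zero_iff.mpr (hr (j + 1))) (hΔt (j + 1)).ne' (hΔt j).ne'
    (inner_eq_of_smul_add_smul_eq hKepler' (hangle j) (hangle (j + 1))) hident'

theorem stmt_6 (m k α δ : ℝ) (hm : 0 < m) (hk : 0 < k) (hα : 0 < α)
    (hc : Real.cos δ ≠ 0)
    (r : ℕ → EuclideanSpace ℝ (Fin 3)) (hr : ∀ n, r n ≠ 0)
    (Δt : ℕ → ℝ) (hΔt : ∀ n, 0 < Δt n)
    (hKepler : ∀ n : ℕ, 1 ≤ n →
      (Δt n)⁻¹ • r (n + 1) + (Δt (n - 1))⁻¹ • r (n - 1) =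
        (1 / Δt n + 1 / Δt (n - 1) -
          k * Δt (n - 1) / (α * m * ‖r n‖ ^ 2 * ‖r (n - 1)‖ * Real.cos δ)) • r n)
    (hangle : ∀ n : ℕ, inner ℝ (r n) (r (n + 1)) = ‖r n‖ * ‖r (n + 1)‖ * Real.cos (2 * δ))
    (hident : ∀ n : ℕ, 1 ≤ n → ‖r (n + 1)‖ * Δt (n - 1) = ‖r (n - 1)‖ * Δt n)
    (p : ℕ → EuclideanSpace ℝ (Fin 3))
    (hp : ∀ n, p n = (m / Δt n) • (r (n + 1) - r n))
    (R : ℕ → ℝ)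
    (hR : ∀ n, R n = 2 * ‖r n‖ * ‖r (n + 1)‖ * Real.cos δ / (‖r n‖ + ‖r (n + 1)‖))
    (E : ℕ → ℝ)
    (hE : ∀ n, E n = ‖p n‖ ^ 2 / (2 * m) - k / (α * R n)) :
    ∀ n : ℕ, 1 ≤ n → E n = E (n - 1) :=
  stmt_6_general m k α δ hm hα hc r hr Δt hΔt hKepler hangle hident p hp R hR E hE
end

section
/- For the discrete Kepler problem, the discrete Runge–Lenz vector A⃗_n = (p⃗_n × L⃗_n)/m - k R⃗_n/R_n is conserved: A⃗_n = A⃗_{n-1}. -/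
open Real

/-!
Write `r̂ = ‖r‖⁻¹ • r`. The vector `R_n` is a positive multiple of `r̂_n + r̂_{n+1}`, whose length
is `2 cos δ` by the constant-angle condition, and the triple-product expansion of `p_n × L_n`
turns `A_n` into an explicit combination of `r_n` and `r_{n+1}`. For `cos δ > 0`, eliminating
`r_{n+1}` by the Kepler equation and `k` by its radial component (the Kepler equation dotted
with `r_n`) reduces `A_n = A_{n-1}` to a polynomial identity.

For `cos δ < 0` the radial component shows that `‖r_n‖ / ‖r_{n+1}‖` drops by at least
`2 - 2 cos 2δ` at every step; since it stays positive, `cos 2δ = 1`. Then all `r_n` point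
the same way, `L_n = 0`, and `A_n = -k r̂_n` is constant.
-/

open scoped RealInnerProductSpace

section InnerProductSpace

variable {F : Type*} [NormedAddCommGroup F] [InnerProductSpace ℝ F]

theorem norm_inv_norm_smul_add_sq {u v : F} (hu : u ≠ 0) (hv : v ≠ 0) :
    ‖‖u‖⁻¹ • u + ‖v‖⁻¹ • v‖ ^ 2 = 2 + 2 * (⟪u, v⟫ / (‖u‖ * ‖v‖)) := by
  have hu' : ‖u‖ ≠ 0 := norm_ne_zero_iff.mpr hu
  have hv' : ‖v‖ ≠ 0 := norm_ne_zero_iff.mpr hv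
  rw [norm_add_sq_real, norm_smul, norm_smul, norm_inv, norm_inv, norm_norm, norm_norm,
    inv_mul_cancel₀ hu', inv_mul_cancel₀ hv', real_inner_smul_left, real_inner_smul_right]
  field_simp
  ring

theorem norm_inv_norm_smul_add_eq {u v : F} {γ : ℝ} (hu : u ≠ 0) (hv : v ≠ 0) (hγ : 0 < γ)
    (h : ⟪u, v⟫ = ‖u‖ * ‖v‖ * (2 * γ ^ 2 - 1)) : ‖‖u‖⁻¹ • u + ‖v‖⁻¹ • v‖ = 2 * γ := by
  have hsq : ‖‖u‖⁻¹ • u + ‖v‖⁻¹ • v‖ ^ 2 = (2 * γ) ^ 2 := by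
    rw [norm_inv_norm_smul_add_sq hu hv, h]
    field_simp [norm_ne_zero_iff.mpr hu, norm_ne_zero_iff.mpr hv]
    ring
  exact (sq_eq_sq₀ (norm_nonneg _) (by positivity)).mp hsq

theorem div_norm_smul_weighted_sum (k : ℝ) {u v : F} (hu : u ≠ 0) (hv : v ≠ 0) :
    (k / ‖(‖u‖ + ‖v‖)⁻¹ • (‖v‖ • u + ‖u‖ • v)‖) • ((‖u‖ + ‖v‖)⁻¹ • (‖v‖ • u + ‖u‖ • v)) =
      (k / ‖‖u‖⁻¹ • u + ‖v‖⁻¹ • v‖) • (‖u‖⁻¹ • u + ‖v‖⁻¹ • v) := by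
  have hu' : 0 < ‖u‖ := norm_pos_iff.mpr hu
  have hv' : 0 < ‖v‖ := norm_pos_iff.mpr hv
  have hc : 0 < ‖u‖ * ‖v‖ / (‖u‖ + ‖v‖) := by positivity
  have hR : (‖u‖ + ‖v‖)⁻¹ • (‖v‖ • u + ‖u‖ • v) =
      (‖u‖ * ‖v‖ / (‖u‖ + ‖v‖)) • (‖u‖⁻¹ • u + ‖v‖⁻¹ • v) := by
    match_scalars <;> field_simp
  rw [hR, norm_smul, norm_of_nonneg hc.le, smul_smul, div_mul_eq_mul_div, mul_comm k,
    mul_div_mul_left _ _ hc.ne']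

theorem inv_norm_smul_eq_of_inner_eq_norm_mul {u v : F} (hu : u ≠ 0) (hv : v ≠ 0)
    (h : ⟪u, v⟫ = ‖u‖ * ‖v‖) : ‖u‖⁻¹ • u = ‖v‖⁻¹ • v :=
  (sameRay_iff_inv_norm_smul_eq_of_ne hu hv).mp
    (sameRay_iff_norm_smul_eq.mpr (inner_eq_norm_mul_iff_real.mp h).symm)

theorem kepler_radial {x y z : F} {s t l C : ℝ} (hs : s ≠ 0) (ht : t ≠ 0) (hy : y ≠ 0)
    (hKep : t⁻¹ • z + s⁻¹ • x = l • y)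
    (hxy : ⟪x, y⟫ = ‖x‖ * ‖y‖ * C) (hyz : ⟪y, z⟫ = ‖y‖ * ‖z‖ * C) (hid : ‖z‖ * s = ‖x‖ * t) :
    l * ‖y‖ = 2 * C * ‖x‖ / s := by
  have hy' : ‖y‖ ≠ 0 := norm_ne_zero_iff.mpr hy
  have h := congrArg (⟪y, ·⟫) hKep
  simp only [inner_add_right, real_inner_smul_right, real_inner_self_eq_norm_sq, hyz,
    real_inner_comm x y ▸ hxy] at h
  field_simp at h
  rw [eq_div_iff hs]
  apply mul_left_cancel₀ ht
  linear_combination -h + C * hid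

-- `A_n` in the variables `u = r_n`, `v = r_{n+1}`, `τ = Δt_n`, `μ = α m`.
noncomputable def rungeLenzOfPositions (μ k τ : ℝ) (u v : F) : F :=
  (μ / τ ^ 2) • ((‖v‖ ^ 2 - ⟪u, v⟫) • u + (‖u‖ ^ 2 - ⟪u, v⟫) • v) -
    (k / ‖‖u‖⁻¹ • u + ‖v‖⁻¹ • v‖) • (‖u‖⁻¹ • u + ‖v‖⁻¹ • v)

theorem rungeLenzOfPositions_of_inner_eq_norm_mul (μ k τ : ℝ) {u v : F} (hu : u ≠ 0) (hv : v ≠ 0)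
    (h : ⟪u, v⟫ = ‖u‖ * ‖v‖) : rungeLenzOfPositions μ k τ u v = -(k • ‖u‖⁻¹ • u) := by
  have hdir := inv_norm_smul_eq_of_inner_eq_norm_mul hu hv h
  have hcross : (‖v‖ ^ 2 - ⟪u, v⟫) • u + (‖u‖ ^ 2 - ⟪u, v⟫) • v = 0 := by
    calc _ = (‖v‖ - ‖u‖) • (‖v‖ • u - ‖u‖ • v) := by rw [h]; module
      _ = 0 := by rw [inner_eq_norm_mul_iff_real.mp h, sub_self, smul_zero]
  have hnorm : ‖‖u‖⁻¹ • u‖ = 1 := by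
    rw [norm_smul, norm_inv, norm_norm, inv_mul_cancel₀ (norm_ne_zero_iff.mpr hu)]
  rw [rungeLenzOfPositions, hcross, smul_zero, zero_sub, ← hdir, ← two_smul ℝ (‖u‖⁻¹ • u),
    norm_smul, hnorm, smul_smul]
  norm_num

theorem rungeLenzOfPositions_step {μ k γ s t : ℝ} {x y z : F} (hμ : μ ≠ 0) (hγ : 0 < γ)
    (hs : 0 < s) (ht : 0 < t) (hx : x ≠ 0) (hy : y ≠ 0) (hz : z ≠ 0)
    (hKep : t⁻¹ • z + s⁻¹ • x = (1 / t + 1 / s - k * s / (μ * ‖y‖ ^ 2 * ‖x‖ * γ)) • y)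
    (hxy : ⟪x, y⟫ = ‖x‖ * ‖y‖ * (2 * γ ^ 2 - 1)) (hyz : ⟪y, z⟫ = ‖y‖ * ‖z‖ * (2 * γ ^ 2 - 1))
    (hid : ‖z‖ * s = ‖x‖ * t) :
    rungeLenzOfPositions μ k t y z = rungeLenzOfPositions μ k s x y := by
  have hx' : 0 < ‖x‖ := norm_pos_iff.mpr hx
  have hy' : 0 < ‖y‖ := norm_pos_iff.mpr hy
  have hrad := kepler_radial hs.ne' ht.ne' hy hKep hxy hyz hid
  have hk : k = μ * ‖x‖ * γ * ((s + t) * ‖y‖ ^ 2 - 2 * (2 * γ ^ 2 - 1) * ‖x‖ * ‖y‖ * t) /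
      (s ^ 2 * t) := by
    field_simp at hrad ⊢
    linear_combination -hrad
  have hnz : ‖z‖ = ‖x‖ * t / s := by rw [eq_div_iff hs.ne', hid]
  have hz' : z = t • ((1 / t + 1 / s - k * s / (μ * ‖y‖ ^ 2 * ‖x‖ * γ)) • y - s⁻¹ • x) := by
    rw [← hKep, add_sub_cancel_right, smul_inv_smul₀ ht.ne']
  rw [rungeLenzOfPositions, rungeLenzOfPositions, norm_inv_norm_smul_add_eq hx hy hγ hxy,
    norm_inv_norm_smul_add_eq hy hz hγ hyz, hxy, hyz, hnz]
  rw [hz', hk]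
  match_scalars <;> field_simp <;> ring

end InnerProductSpace

theorem one_le_of_forall_add_inv_lt {x : ℕ → ℝ} {C : ℝ} (hx : ∀ n, 0 < x n)
    (h : ∀ n, x (n + 1) + (x n)⁻¹ < 2 * C) : 1 ≤ C := by
  by_contra! hC
  have hstep (n : ℕ) : x (n + 1) ≤ x n - (2 - 2 * C) := by
    have hAMGM : 2 ≤ x n + (x n)⁻¹ := by
      have hsq : x n + (x n)⁻¹ - 2 = (x n - 1) ^ 2 / x n := by field_simp [(hx n).ne']; ring
      linarith [div_nonneg (sq_nonneg (x n - 1)) (hx n).le]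
    linarith [h n]
  have hdesc (n : ℕ) : x n ≤ x 0 - n * (2 - 2 * C) := by
    induction n with
    | zero => simp
    | succ n ih => push_cast; linarith [hstep n]
  obtain ⟨N, hN⟩ := exists_nat_gt (x 0 / (2 - 2 * C))
  rw [div_lt_iff₀ (by linarith)] at hN
  linarith [hdesc N, hx N]

theorem div_add_div_lt_of_kepler_radial {a b c s t K C : ℝ} (ha : 0 < a) (hb : 0 < b)
    (hs : 0 < s) (ht : 0 < t) (hK : K < 0)
    (hrad : (1 / t + 1 / s - K) * b = 2 * C * a / s) (hid : c * s = a * t) :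
    b / c + b / a < 2 * C := by
  have hc' : c = a * t / s := by rw [eq_div_iff hs.ne', hid]
  calc b / c + b / a = s / a * ((1 / t + 1 / s) * b) := by rw [hc']; field_simp
    _ < s / a * ((1 / t + 1 / s - K) * b) := by gcongr; linarith
    _ = 2 * C := by rw [hrad]; field_simp

theorem cross3_eq_toLp_cross (u v : EuclideanSpace ℝ (Fin 3)) :
    cross3 u v = WithLp.toLp 2 (crossProduct (WithLp.ofLp u) (WithLp.ofLp v)) := by
  rw [cross_apply]; rfl

theorem cross3_smul_sub_cross3 (a b : ℝ) (u v : EuclideanSpace ℝ (Fin 3)) :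
    cross3 (a • (v - u)) (b • cross3 u v) =
      (a * b) • ((‖v‖ ^ 2 - ⟪u, v⟫) • u + (‖u‖ ^ 2 - ⟪u, v⟫) • v) := by
  simp only [cross3_eq_toLp_cross, WithLp.ofLp_smul, WithLp.ofLp_sub,
    LinearMap.map_smul, LinearMap.smul_apply, cross_cross_eq_smul_sub_smul',
    ← real_inner_self_eq_norm_sq, EuclideanSpace.inner_eq_star_dotProduct]
  ext i
  simp only [PiLp.smul_apply, PiLp.add_apply, Pi.smul_apply, Pi.sub_apply, star_trivial,
    sub_dotProduct, dotProduct_sub, dotProduct_comm u.ofLp v.ofLp, smul_eq_mul]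
  ring

theorem rungeLenz_eq_rungeLenzOfPositions {m : ℝ} (hm : m ≠ 0) (α k τ : ℝ)
    {u v : EuclideanSpace ℝ (Fin 3)} (hu : u ≠ 0) (hv : v ≠ 0) :
    (1 / m) • cross3 ((m / τ) • (v - u)) ((α * m / τ) • cross3 u v) -
        (k / ‖(‖u‖ + ‖v‖)⁻¹ • (‖v‖ • u + ‖u‖ • v)‖) • ((‖u‖ + ‖v‖)⁻¹ • (‖v‖ • u + ‖u‖ • v)) =
      rungeLenzOfPositions (α * m) k τ u v := by
  rw [cross3_smul_sub_cross3, smul_smul, div_norm_smul_weighted_sum k hu hv, rungeLenzOfPositions]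
  congr 2
  field_simp

theorem stmt_7 (m k α δ : ℝ) (hm : 0 < m) (hk : 0 < k) (hα : 0 < α)
    (hc : Real.cos δ ≠ 0)
    (r : ℕ → EuclideanSpace ℝ (Fin 3)) (hr : ∀ n, r n ≠ 0)
    (Δt : ℕ → ℝ) (hΔt : ∀ n, 0 < Δt n)
    (hKepler : ∀ n : ℕ, 1 ≤ n →
      (Δt n)⁻¹ • r (n + 1) + (Δt (n - 1))⁻¹ • r (n - 1) =
        (1 / Δt n + 1 / Δt (n - 1) -
          k * Δt (n - 1) / (α * m * ‖r n‖ ^ 2 * ‖r (n - 1)‖ * Real.cos δ)) • r n)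
    (hangle : ∀ n : ℕ, inner ℝ (r n) (r (n + 1)) = ‖r n‖ * ‖r (n + 1)‖ * Real.cos (2 * δ))
    (hident : ∀ n : ℕ, 1 ≤ n → ‖r (n + 1)‖ * Δt (n - 1) = ‖r (n - 1)‖ * Δt n)
    (p L R A : ℕ → EuclideanSpace ℝ (Fin 3))
    (hp : ∀ n, p n = (m / Δt n) • (r (n + 1) - r n))
    (hL : ∀ n, L n = (α * m / Δt n) • cross3 (r n) (r (n + 1)))
    (hRvec : ∀ n, R n = (‖r n‖ + ‖r (n + 1)‖)⁻¹ • (‖r (n + 1)‖ • r n + ‖r n‖ • r (n + 1)))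
    (hA : ∀ n, A n = (1 / m) • cross3 (p n) (L n) - (k / ‖R n‖) • R n) :
    ∀ n : ℕ, 1 ≤ n → A n = A (n - 1) := by
  have hρ (j : ℕ) : 0 < ‖r j‖ := norm_pos_iff.mpr (hr j)
  have hA' (j : ℕ) : A j = rungeLenzOfPositions (α * m) k (Δt j) (r j) (r (j + 1)) := by
    rw [hA, hp, hL, hRvec]
    exact rungeLenz_eq_rungeLenzOfPositions hm.ne' α k (Δt j) (hr j) (hr (j + 1))
  have hKep (j : ℕ) := hKepler (j + 1) j.succ_pos
  have hid (j : ℕ) := hident (j + 1) j.succ_pos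
  simp only [Nat.add_sub_cancel] at hKep hid
  intro n hn
  obtain ⟨l, rfl⟩ := Nat.exists_eq_add_of_le' hn
  rw [Nat.add_sub_cancel, hA', hA']
  rcases hc.lt_or_gt with hneg | hpos
  · have hC : Real.cos (2 * δ) = 1 := by
      refine le_antisymm (cos_le_one _) (one_le_of_forall_add_inv_lt
        (x := fun j => ‖r j‖ / ‖r (j + 1)‖) (fun j => div_pos (hρ j) (hρ (j + 1))) fun j => ?_)
      have hK : k * Δt j / (α * m * ‖r (j + 1)‖ ^ 2 * ‖r j‖ * Real.cos δ) < 0 :=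
        div_neg_of_pos_of_neg (by have := hΔt j; positivity)
          (mul_neg_of_pos_of_neg (by have := hρ j; have := hρ (j + 1); positivity) hneg)
      rw [inv_div]
      exact div_add_div_lt_of_kepler_radial (hρ j) (hρ (j + 1)) (hΔt j)
        (hΔt (j + 1)) hK (kepler_radial (hΔt j).ne' (hΔt (j + 1)).ne' (hr (j + 1)) (hKep j)
          (hangle j) (hangle (j + 1)) (hid j)) (hid j)
    simp only [hC, mul_one] at hangle
    rw [rungeLenzOfPositions_of_inner_eq_norm_mul _ _ _ (hr _) (hr _) (hangle _),
      rungeLenzOfPositions_of_inner_eq_norm_mul _ _ _ (hr _) (hr _) (hangle _),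
      inv_norm_smul_eq_of_inner_eq_norm_mul (hr _) (hr _) (hangle l)]
  · simp only [Real.cos_two_mul] at hangle
    exact rungeLenzOfPositions_step (by positivity) hpos (hΔt l) (hΔt (l + 1)) (hr l) (hr (l + 1))
      (hr (l + 2)) (hKep l) (hangle l) (hangle (l + 1)) (hid l)
end

section
/- Substituting the bisection relation r⃗_{n+1}/r_{n+1} + r⃗_{n-1}/r_{n-1} = 2 cos δ · r⃗_n/r_n and the identity r_{n+1} Δt_{n-1} = r_{n-1} Δt_n into the discrete Kepler equation yields the explicit time-step recursion Δt_n = Δt_{n-1} / (2 cos δ · (r_{n-1}/r_n) - 1 + k r_{n-1} (Δt_{n-1})² / (m α cos δ · r_n² r_{n-1}²)). -/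
open Real

/-! Solving the bisection relation for `c` and using `‖c‖ Δtₘ = ‖a‖ Δtₙ`, the `a`-components of the
discrete Kepler equation cancel, leaving a scalar multiple of `b` on both sides. Comparing the
coefficients of `b ≠ 0` gives `Δtₘ / Δtₙ` as the claimed denominator. -/

section

variable {E : Type*} [NormedAddCommGroup E] [NormedSpace ℝ E]

theorem inv_smul_add_inv_smul_eq_smul_iff {a b c : E} {s L τm τn : ℝ}
    (hτm : τm ≠ 0) (hτn : τn ≠ 0) (hb : b ≠ 0)
    (hbisect : ‖c‖⁻¹ • c + ‖a‖⁻¹ • a = s • ‖b‖⁻¹ • b) (hident : ‖c‖ * τm = ‖a‖ * τn) :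
    τn⁻¹ • c + τm⁻¹ • a = L • b ↔ s * ‖a‖ / (‖b‖ * τm) = L := by
  have hscale : τn⁻¹ * ‖c‖ = ‖a‖ * τm⁻¹ := by
    field_simp
    linarith
  have hc : τn⁻¹ • c = (s * ‖a‖ / (‖b‖ * τm)) • b - τm⁻¹ • a := by
    calc τn⁻¹ • c = (τn⁻¹ * ‖c‖) • NormedSpace.normalize c := by
          rw [mul_smul, NormedSpace.norm_smul_normalize]
      _ = (‖a‖ * τm⁻¹) • (s • ‖b‖⁻¹ • b - ‖a‖⁻¹ • a) := by
          rw [hscale, NormedSpace.normalize, ← eq_sub_of_add_eq hbisect]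
      _ = (s * ‖a‖ / (‖b‖ * τm)) • b - τm⁻¹ • (‖a‖ • NormedSpace.normalize a) := by
          simp only [NormedSpace.normalize]
          module
      _ = (s * ‖a‖ / (‖b‖ * τm)) • b - τm⁻¹ • a := by
          rw [NormedSpace.norm_smul_normalize]
  rw [hc, sub_add_cancel]
  exact (smul_left_injective ℝ hb).eq_iff

end

theorem stmt_11_general (m k α δ : ℝ)
    (a b c : EuclideanSpace ℝ (Fin 3)) (ha : a ≠ 0) (hb : b ≠ 0)
    (Δtm Δtn : ℝ) (hΔtm : 0 < Δtm) (hΔtn : 0 < Δtn)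
    (hKepler : Δtn⁻¹ • c + Δtm⁻¹ • a =
      (1 / Δtn + 1 / Δtm - k * Δtm / (α * m * ‖b‖ ^ 2 * ‖a‖ * Real.cos δ)) • b)
    (hbisect : ‖c‖⁻¹ • c + ‖a‖⁻¹ • a = (2 * Real.cos δ) • (‖b‖⁻¹ • b))
    (hident : ‖c‖ * Δtm = ‖a‖ * Δtn) :
    Δtn = Δtm / (2 * Real.cos δ * (‖a‖ / ‖b‖) - 1 +
      k * ‖a‖ * Δtm ^ 2 / (m * α * Real.cos δ * ‖b‖ ^ 2 * ‖a‖ ^ 2)) := by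
  have hcoeff :=
    (inv_smul_add_inv_smul_eq_smul_iff hΔtm.ne' hΔtn.ne' hb hbisect hident).mp hKepler
  have hA : ‖a‖ ≠ 0 := norm_ne_zero_iff.mpr ha
  have hdenom : 2 * Real.cos δ * (‖a‖ / ‖b‖) - 1 +
      k * ‖a‖ * Δtm ^ 2 / (m * α * Real.cos δ * ‖b‖ ^ 2 * ‖a‖ ^ 2) = Δtm / Δtn := by
    have hterm : k * ‖a‖ * Δtm ^ 2 / (m * α * Real.cos δ * ‖b‖ ^ 2 * ‖a‖ ^ 2) =
        Δtm * (k * Δtm / (α * m * ‖b‖ ^ 2 * ‖a‖ * Real.cos δ)) := by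
      field_simp
    have hK : k * Δtm / (α * m * ‖b‖ ^ 2 * ‖a‖ * Real.cos δ) =
        1 / Δtn + 1 / Δtm - 2 * Real.cos δ * ‖a‖ / (‖b‖ * Δtm) := by
      linarith
    rw [hterm, hK]
    field_simp
    ring
  rw [hdenom]
  field_simp

theorem stmt_11 (m k α δ : ℝ) (hm : 0 < m) (hk : 0 < k) (hα : 0 < α)
    (hc : Real.cos δ ≠ 0)
    (a b c : EuclideanSpace ℝ (Fin 3)) (ha : a ≠ 0) (hb : b ≠ 0) (hcne : c ≠ 0)
    (Δtm Δtn : ℝ) (hΔtm : 0 < Δtm) (hΔtn : 0 < Δtn)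
    (hKepler : Δtn⁻¹ • c + Δtm⁻¹ • a =
      (1 / Δtn + 1 / Δtm - k * Δtm / (α * m * ‖b‖ ^ 2 * ‖a‖ * Real.cos δ)) • b)
    (hbisect : ‖c‖⁻¹ • c + ‖a‖⁻¹ • a = (2 * Real.cos δ) • (‖b‖⁻¹ • b))
    (hident : ‖c‖ * Δtm = ‖a‖ * Δtn) :
    Δtn = Δtm / (2 * Real.cos δ * (‖a‖ / ‖b‖) - 1 +
      k * ‖a‖ * Δtm ^ 2 / (m * α * Real.cos δ * ‖b‖ ^ 2 * ‖a‖ ^ 2)) :=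
  stmt_11_general m k α δ a b c ha hb Δtm Δtn hΔtm hΔtn hKepler hbisect hident
end
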